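/- arXiv:1304.4433 — 2 statements merged into one kernel-verified Lean document; each statement's English description precedes it below -/
import Mathlib

section
/- Let Ȳ ~ N(μ, (1/2)e^{θ_1+θ_2 μ}) be independent of S^2, where S^2/e^{θ_1+θ_2 μ} ~ χ²_1. Then E[S^2 exp(-θ_1 - θ_2 Ȳ)] = exp((1/4) θ_2^2 e^{θ_1+θ_2 μ}). In particular this expectation equals 1 (so the MACL estimating equation is unbiased) if and only if θ_2 = 0. -/
/-!
Under the product law the expectation factors as `E[S²] · E[exp(-θ₁ - θ₂Ȳ)]`. With
`c = e^{θ₁+θ₂μ}`, the first factor is `c` (a χ²₁ variable has mean one) and the second is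
`e^{-θ₁}` times the Gaussian moment generating function at `-θ₂`, i.e.
`exp(-θ₁ - θ₂μ + cθ₂²/4)`. The factor `c` cancels `exp(-θ₁ - θ₂μ)`, leaving `exp(cθ₂²/4)`,
which is `1` exactly when `θ₂ = 0` because `c > 0`.
-/

open MeasureTheory ProbabilityTheory Real
open scoped NNReal ENNReal

/-- Chi-squared with one degree of freedom: the law of `Z²`, `Z ~ N(0,1)`. -/
noncomputable def chiSqOne : Measure ℝ :=
  (gaussianReal 0 1).map (fun x => x ^ 2)

instance : IsProbabilityMeasure chiSqOne :=
  Measure.isProbabilityMeasure_map (by fun_prop)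

lemma integral_sq_gaussianReal_zero (v : ℝ≥0) : ∫ x, x ^ 2 ∂gaussianReal 0 v = v := by
  rw [← variance_fun_id_gaussianReal (μ := 0), variance_eq_integral aemeasurable_id']
  simp

lemma integral_id_chiSqOne : ∫ x, x ∂chiSqOne = 1 := by
  rw [chiSqOne, integral_map (by fun_prop) (by fun_prop), integral_sq_gaussianReal_zero]
  simp

lemma integral_id_map_const_mul (ν : Measure ℝ) (c : ℝ) :
    ∫ y, y ∂ν.map (c * ·) = c * ∫ x, x ∂ν := by
  rw [integral_map (by fun_prop) (by fun_prop), integral_const_mul]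

lemma integral_exp_affine_gaussianReal (μ : ℝ) (v : ℝ≥0) (a b : ℝ) :
    ∫ x, exp (a + b * x) ∂gaussianReal μ v = exp (a + b * μ + v * b ^ 2 / 2) := by
  have mgf_at_b := congrFun (mgf_fun_id_gaussianReal (μ := μ) (v := v)) b
  simp only [mgf] at mgf_at_b
  simp_rw [exp_add a, integral_const_mul, mgf_at_b, ← exp_add]
  ring_nf

lemma integral_mul_exp_gaussianReal_prod_map_chiSqOne (θ₁ θ₂ μ c : ℝ) (hc : 0 ≤ c) :
    ∫ p : ℝ × ℝ, p.2 * exp (-θ₁ - θ₂ * p.1)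
        ∂(gaussianReal μ (1 / 2 * c).toNNReal).prod (chiSqOne.map (c * ·))
      = c * exp (-θ₁ - θ₂ * μ + c * θ₂ ^ 2 / 4) := by
  have : IsProbabilityMeasure (chiSqOne.map (c * ·)) :=
    Measure.isProbabilityMeasure_map (by fun_prop)
  have hv : ((1 / 2 * c).toNNReal : ℝ) = c / 2 := by
    rw [Real.coe_toNNReal _ (by positivity)]
    ring
  simp_rw [mul_comm _ (exp _)]
  rw [integral_prod_mul (fun x => exp (-θ₁ - θ₂ * x)) (fun y => y), integral_id_map_const_mul,
    integral_id_chiSqOne]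
  simp_rw [sub_eq_add_neg (-θ₁), ← neg_mul]
  rw [integral_exp_affine_gaussianReal, hv]
  ring_nf

/-- Let `Ȳ ~ N(μ, (1/2)e^{θ₁+θ₂μ})` be independent of `S²`, with
`S²/e^{θ₁+θ₂μ} ~ χ²₁`.  Then `E[S² exp(-θ₁-θ₂Ȳ)] = exp((1/4)θ₂² e^{θ₁+θ₂μ})`,
and this expectation equals `1` iff `θ₂ = 0`. -/
theorem macl_ee_bias (θ₁ θ₂ μ : ℝ) :
    (∫ p : ℝ × ℝ, p.2 * Real.exp (-θ₁ - θ₂ * p.1)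
        ∂((gaussianReal μ ((1 / 2 * Real.exp (θ₁ + θ₂ * μ)).toNNReal)).prod
            (chiSqOne.map (fun x => Real.exp (θ₁ + θ₂ * μ) * x)))
      = Real.exp (1 / 4 * θ₂ ^ 2 * Real.exp (θ₁ + θ₂ * μ))) ∧
    ((∫ p : ℝ × ℝ, p.2 * Real.exp (-θ₁ - θ₂ * p.1)
        ∂((gaussianReal μ ((1 / 2 * Real.exp (θ₁ + θ₂ * μ)).toNNReal)).prod
            (chiSqOne.map (fun x => Real.exp (θ₁ + θ₂ * μ) * x)))
      = 1) ↔ θ₂ = 0) := by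
  have expectation : ∫ p : ℝ × ℝ, p.2 * exp (-θ₁ - θ₂ * p.1)
        ∂(gaussianReal μ (1 / 2 * exp (θ₁ + θ₂ * μ)).toNNReal).prod
          (chiSqOne.map (exp (θ₁ + θ₂ * μ) * ·))
      = exp (1 / 4 * θ₂ ^ 2 * exp (θ₁ + θ₂ * μ)) := by
    rw [integral_mul_exp_gaussianReal_prod_map_chiSqOne _ _ _ _ (exp_pos _).le, ← exp_add]
    ring_nf
  refine ⟨expectation, ?_⟩
  rw [expectation, exp_eq_one_iff]
  simp [(exp_pos _).ne']
end

section
/- Let θ_2 < 0, c > 0, and g_Y(μ) = (Y-μ)^2 e^{-(θ_1+θ_2 μ)} with local maximum value M = g_Y(Y + 2/θ_2). If M ≤ c, then the set {μ ∈ ℝ : g_Y(μ) ≤ c} is an interval of the form (-∞, r_1]. If M > c, it is a union (-∞, r_1] ∪ [l_2, r_2] of two disjoint intervals with r_1 < Y + 2/θ_2 < l_2 < Y < r_2. -/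
/-!
Up to the factor `e^{-(θ₁+θ₂μ)} > 0`, the derivative of `g_Y` is `θ₂ (μ - Y) (Y + 2/θ₂ - μ)`, so
`g_Y` increases up to its local maximum at `m = Y + 2/θ₂`, decreases to its zero at `Y`, and then
increases again; it tends to `0` at `-∞` and to `+∞` at `+∞`. For any continuous function of this
shape the sublevel set `{g ≤ c}` is located by the intermediate value theorem: when `g m ≤ c` the
level `c` is crossed once, on `[Y, ∞)`; when `g m > c` it is crossed once on each monotone piece.
-/

open Real Set Filter Topology

section NShaped

variable {f : ℝ → ℝ} {a b c : ℝ}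

theorem setOf_le_eq_Iic_of_nShaped (hf : Continuous f) (hab : a ≤ b)
    (h₁ : MonotoneOn f (Iic a)) (h₂ : AntitoneOn f (Icc a b)) (h₃ : StrictMonoOn f (Ici b))
    (htop : Tendsto f atTop atTop) (hfa : f a ≤ c) :
    ∃ r, {x | f x ≤ c} = Iic r := by
  have hfb : f b ≤ c := (h₂ (left_mem_Icc.2 hab) (right_mem_Icc.2 hab) hab).trans hfa
  obtain ⟨r, hbr, hr⟩ := intermediate_value_Ici hf.continuousOn htop hfb
  refine ⟨r, Set.ext fun x => ?_⟩
  simp only [mem_ofPred_eq, mem_Iic]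
  rcases le_total x a with hxa | hxa
  · exact iff_of_true ((h₁ hxa self_mem_Iic hxa).trans hfa) (hxa.trans (hab.trans hbr))
  rcases le_total x b with hxb | hxb
  · exact iff_of_true ((h₂ (left_mem_Icc.2 hab) ⟨hxa, hxb⟩ hxa).trans hfa) (hxb.trans hbr)
  · rw [← hr, h₃.le_iff_le hxb hbr]

theorem setOf_le_eq_Iic_union_Icc_of_nShaped (hf : Continuous f) (hab : a ≤ b)
    (h₁ : StrictMonoOn f (Iic a)) (h₂ : StrictAntiOn f (Icc a b)) (h₃ : StrictMonoOn f (Ici b))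
    (hbot : ∀ᶠ x in atBot, f x ≤ c) (htop : Tendsto f atTop atTop) (hfa : c < f a)
    (hfb : f b < c) :
    ∃ r₁ l₂ r₂, r₁ < a ∧ a < l₂ ∧ l₂ < b ∧ b < r₂ ∧ {x | f x ≤ c} = Iic r₁ ∪ Icc l₂ r₂ := by
  obtain ⟨x₀, hx₀, hx₀a⟩ := (hbot.and (eventually_le_atBot a)).exists
  obtain ⟨r₁, ⟨-, hr₁a⟩, hr₁⟩ := intermediate_value_Icc hx₀a hf.continuousOn ⟨hx₀, hfa.le⟩
  obtain ⟨l₂, ⟨hal₂, hl₂b⟩, hl₂⟩ := intermediate_value_Icc' hab hf.continuousOn ⟨hfb.le, hfa.le⟩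
  obtain ⟨r₂, hbr₂, hr₂⟩ := intermediate_value_Ici hf.continuousOn htop hfb.le
  replace hr₁a : r₁ < a := hr₁a.lt_of_ne (by rintro rfl; linarith)
  replace hal₂ : a < l₂ := hal₂.lt_of_ne (by rintro rfl; linarith)
  replace hl₂b : l₂ < b := hl₂b.lt_of_ne (by rintro rfl; linarith)
  replace hbr₂ : b < r₂ := (mem_Ici.1 hbr₂).lt_of_ne (by rintro rfl; linarith)
  refine ⟨r₁, l₂, r₂, hr₁a, hal₂, hl₂b, hbr₂, Set.ext fun x => ?_⟩
  simp only [mem_ofPred_eq, mem_union, mem_Iic, mem_Icc]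
  rcases le_total x a with hxa | hxa
  · rw [← hr₁, h₁.le_iff_le hxa hr₁a.le]
    have : ¬ l₂ ≤ x := by linarith
    tauto
  rcases le_total x b with hxb | hxb
  · rw [← hl₂, h₂.le_iff_ge ⟨hxa, hxb⟩ ⟨hal₂.le, hl₂b.le⟩]
    have : ¬ x ≤ r₁ := by linarith
    have : x ≤ r₂ := by linarith
    tauto
  · rw [← hr₂, h₃.le_iff_le hxb hbr₂.le]
    have : ¬ x ≤ r₁ := by linarith
    have : l₂ ≤ x := by linarith
    tauto

end NShaped

/-- `g_Y(μ)`: the squared standardized residual of `Y ~ N(μ, e^{θ₁+θ₂μ})`. -/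
noncomputable def pivotSq (Y θ₁ θ₂ μ : ℝ) : ℝ := (Y - μ) ^ 2 * exp (-(θ₁ + θ₂ * μ))

section Pivot

variable (Y θ₁ : ℝ) {θ₂ : ℝ}

theorem continuous_pivotSq : Continuous (pivotSq Y θ₁ θ₂) := by
  unfold pivotSq; fun_prop

@[simp]
theorem pivotSq_self : pivotSq Y θ₁ θ₂ Y = 0 := by simp [pivotSq]

theorem hasDerivAt_pivotSq (hθ₂ : θ₂ ≠ 0) (μ : ℝ) :
    HasDerivAt (pivotSq Y θ₁ θ₂)
      (θ₂ * (μ - Y) * (Y + 2 / θ₂ - μ) * exp (-(θ₁ + θ₂ * μ))) μ := by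
  have hsq : HasDerivAt (fun x => (Y - x) ^ 2) (-(2 * (Y - μ))) μ := by
    simpa using ((hasDerivAt_id μ).const_sub Y).fun_pow 2
  have hexp : HasDerivAt (fun x => exp (-(θ₁ + θ₂ * x))) (exp (-(θ₁ + θ₂ * μ)) * -θ₂) μ := by
    simpa using (((hasDerivAt_id μ).const_mul θ₂).const_add θ₁).neg.exp
  refine (hsq.mul hexp).congr_deriv ?_
  field_simp
  ring

theorem strictMonoOn_pivotSq_Iic (hθ₂ : θ₂ < 0) :
    StrictMonoOn (pivotSq Y θ₁ θ₂) (Iic (Y + 2 / θ₂)) := by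
  refine strictMonoOn_of_hasDerivWithinAt_pos (convex_Iic _)
    (continuous_pivotSq Y θ₁).continuousOn
    (fun μ _ => (hasDerivAt_pivotSq Y θ₁ hθ₂.ne μ).hasDerivWithinAt) fun μ hμ => ?_
  rw [interior_Iic, mem_Iio] at hμ
  have hμY : μ < Y := hμ.trans (add_lt_iff_neg_left.2 (div_neg_of_pos_of_neg two_pos hθ₂))
  exact mul_pos (mul_pos (mul_pos_of_neg_of_neg hθ₂ (sub_neg.2 hμY)) (sub_pos.2 hμ)) (exp_pos _)

theorem strictAntiOn_pivotSq_Icc (hθ₂ : θ₂ < 0) :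
    StrictAntiOn (pivotSq Y θ₁ θ₂) (Icc (Y + 2 / θ₂) Y) := by
  refine strictAntiOn_of_hasDerivWithinAt_neg (convex_Icc _ _)
    (continuous_pivotSq Y θ₁).continuousOn
    (fun μ _ => (hasDerivAt_pivotSq Y θ₁ hθ₂.ne μ).hasDerivWithinAt) fun μ hμ => ?_
  rw [interior_Icc, mem_Ioo] at hμ
  exact mul_neg_of_neg_of_pos
    (mul_neg_of_pos_of_neg (mul_pos_of_neg_of_neg hθ₂ (sub_neg.2 hμ.2)) (sub_neg.2 hμ.1))
    (exp_pos _)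

theorem strictMonoOn_pivotSq_Ici (hθ₂ : θ₂ < 0) :
    StrictMonoOn (pivotSq Y θ₁ θ₂) (Ici Y) := by
  refine strictMonoOn_of_hasDerivWithinAt_pos (convex_Ici _)
    (continuous_pivotSq Y θ₁).continuousOn
    (fun μ _ => (hasDerivAt_pivotSq Y θ₁ hθ₂.ne μ).hasDerivWithinAt) fun μ hμ => ?_
  rw [interior_Ici, mem_Ioi] at hμ
  have hμ' : Y + 2 / θ₂ < μ :=
    hμ.trans' (add_lt_iff_neg_left.2 (div_neg_of_pos_of_neg two_pos hθ₂))
  exact mul_pos (mul_pos_of_neg_of_neg (mul_neg_of_neg_of_pos hθ₂ (sub_pos.2 hμ))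
    (sub_neg.2 hμ')) (exp_pos _)

theorem tendsto_pivotSq_atBot (hθ₂ : θ₂ < 0) : Tendsto (pivotSq Y θ₁ θ₂) atBot (𝓝 0) := by
  have hres : Tendsto (fun μ : ℝ => Y - μ) atBot atTop :=
    tendsto_atTop_add_const_left _ _ tendsto_neg_atBot_atTop
  have := ((tendsto_rpow_mul_exp_neg_mul_atTop_nhds_zero 2 (-θ₂) (neg_pos.2 hθ₂)).comp
    hres).const_mul (exp (-(θ₁ + θ₂ * Y)))
  rw [mul_zero] at this
  -- `g_Y(μ) = e^{-(θ₁+θ₂Y)} s² e^{θ₂ s}` with `s = Y - μ`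
  refine this.congr fun μ => ?_
  simp only [Function.comp, rpow_two, pivotSq]
  rw [mul_left_comm, ← exp_add]
  ring_nf

theorem tendsto_pivotSq_atTop (hθ₂ : θ₂ ≤ 0) : Tendsto (pivotSq Y θ₁ θ₂) atTop atTop := by
  have hsq : Tendsto (fun μ : ℝ => (Y - μ) ^ 2) atTop atTop := by
    refine ((tendsto_pow_atTop two_ne_zero).comp
      (tendsto_atTop_add_const_right _ (-Y) tendsto_id)).congr fun μ => ?_
    simp only [Function.comp, id]
    ring
  refine tendsto_atTop_mono' _ ?_ (hsq.atTop_mul_const (exp_pos (-θ₁)))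
  filter_upwards [eventually_ge_atTop 0] with μ hμ
  rw [pivotSq]
  gcongr ?_ * exp ?_
  nlinarith

end Pivot

/-- Shape of the exact confidence set `{μ : g_Y(μ) ≤ c}` for
`g_Y(μ) = (Y-μ)² e^{-(θ₁+θ₂μ)}`, `θ₂ < 0`, `c > 0`, with `M = g_Y(Y + 2/θ₂)`
the local maximum value: if `M ≤ c` the set is a left half-line `(-∞, r₁]`;
if `M > c` it is a disjoint union `(-∞, r₁] ∪ [l₂, r₂]` with
`r₁ < Y + 2/θ₂ < l₂ < Y < r₂`. -/
theorem confidence_set_shape (Y θ₁ θ₂ c : ℝ) (hθ₂ : θ₂ < 0) (hc : 0 < c) :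
    ((Y - (Y + 2 / θ₂)) ^ 2 * Real.exp (-(θ₁ + θ₂ * (Y + 2 / θ₂))) ≤ c →
      ∃ r₁ : ℝ,
        {μ : ℝ | (Y - μ) ^ 2 * Real.exp (-(θ₁ + θ₂ * μ)) ≤ c} = Set.Iic r₁) ∧
    (c < (Y - (Y + 2 / θ₂)) ^ 2 * Real.exp (-(θ₁ + θ₂ * (Y + 2 / θ₂))) →
      ∃ r₁ l₂ r₂ : ℝ,
        r₁ < Y + 2 / θ₂ ∧ Y + 2 / θ₂ < l₂ ∧ l₂ < Y ∧ Y < r₂ ∧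
        {μ : ℝ | (Y - μ) ^ 2 * Real.exp (-(θ₁ + θ₂ * μ)) ≤ c}
          = Set.Iic r₁ ∪ Set.Icc l₂ r₂) := by
  have hpeak : Y + 2 / θ₂ ≤ Y := (add_lt_iff_neg_left.2 (div_neg_of_pos_of_neg two_pos hθ₂)).le
  have h₁ := strictMonoOn_pivotSq_Iic Y θ₁ hθ₂
  have h₂ := strictAntiOn_pivotSq_Icc Y θ₁ hθ₂
  have h₃ := strictMonoOn_pivotSq_Ici Y θ₁ hθ₂
  have htop := tendsto_pivotSq_atTop Y θ₁ hθ₂.le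
  refine ⟨fun hM => ?_, fun hM => ?_⟩
  · exact setOf_le_eq_Iic_of_nShaped (continuous_pivotSq Y θ₁) hpeak h₁.monotoneOn
      h₂.antitoneOn h₃ htop hM
  · exact setOf_le_eq_Iic_union_Icc_of_nShaped (continuous_pivotSq Y θ₁) hpeak h₁ h₂ h₃
      ((tendsto_pivotSq_atBot Y θ₁ hθ₂).eventually (ge_mem_nhds hc)) htop hM (by simpa using hc)
end
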